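/- arXiv:2201.01013 — 3 statements merged into one kernel-verified Lean document; each statement's English description precedes it below -/
import Mathlib

section
/- If there exists t such that every (m+1)-definable set of an information system is a union of at most t m-definable sets, then for every n ≥ 1, every n-definable set is a union of at most t^n m-definable sets. -/
/-- `B` is an `m`-definable set of the information system with universe `A`
and attribute set `F`: a nonempty solution set of a system of `m` equations `f i x = δ i`
with attributes from `F` (not necessarily distinct). -/
def Definable {A : Type*} (F : Set (A → Bool)) (m : ℕ) (B : Set A) : Prop :=
  B.Nonempty ∧ ∃ f : Fin m → A → Bool, ∃ δ : Fin m → Bool,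
    (∀ i, f i ∈ F) ∧ B = {a | ∀ i, f i a = δ i}

/-- `B` is a union of at most `t` `m`-definable sets. -/
def UnionOfAtMost {A : Type*} (F : Set (A → Bool)) (m t : ℕ) (B : Set A) : Prop :=
  ∃ k : ℕ, k ≤ t ∧ ∃ D : Fin k → Set A, (∀ i, Definable F m (D i)) ∧ B = ⋃ i, D i

/-!
An `(n+1)`-definable set is an `n`-definable set cut by one more equation `g = b`. Cutting each
of the at most `t ^ n` pieces `D` of the `n`-definable set by that equation gives either the
empty set or an `(m+1)`-definable set `D ∩ {g = b}`, which by hypothesis is a union of at most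
`t` `m`-definable sets. The induction starts at `n = 1`, where a single equation can be repeated
to give an `(m+1)`-definable set.
-/

open Function

section

variable {A : Type*} {F : Set (A → Bool)}

lemma setOf_forall_fin_succ_eq_inter {n : ℕ} (f : Fin (n + 1) → A → Bool) (δ : Fin (n + 1) → Bool) :
    {a | ∀ i, f i a = δ i} =
      {a | ∀ i : Fin n, f i.castSucc a = δ i.castSucc} ∩ {a | f (Fin.last n) a = δ (Fin.last n)} := by
  ext a
  exact Fin.forall_fin_succ'

namespace Definable

variable {m n k : ℕ} {B : Set A}

lemma of_surjective (hB : Definable F n B) {σ : Fin k → Fin n} (hσ : Surjective σ) :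
    Definable F k B := by
  obtain ⟨hne, f, δ, hf, rfl⟩ := hB
  refine ⟨hne, f ∘ σ, δ ∘ σ, fun i => hf (σ i), ?_⟩
  ext a
  exact hσ.forall

lemma of_le (hB : Definable F n B) (hn : 1 ≤ n) (hnk : n ≤ k) : Definable F k B :=
  have : Nonempty (Fin n) := ⟨⟨0, hn⟩⟩
  hB.of_surjective (invFun_surjective (Fin.castLE_injective hnk))

lemma exists_eq_inter_of_succ (hB : Definable F (n + 1) B) :
    ∃ B₀, Definable F n B₀ ∧ ∃ g ∈ F, ∃ b, B = B₀ ∩ {a | g a = b} := by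
  obtain ⟨hne, f, δ, hf, rfl⟩ := hB
  rw [setOf_forall_fin_succ_eq_inter] at hne ⊢
  exact ⟨_, ⟨hne.mono Set.inter_subset_left, _, _, fun i => hf _, rfl⟩, _, hf _, _, rfl⟩

lemma inter_setOf {D : Set A} (hD : Definable F m D) {g : A → Bool} (hg : g ∈ F) {b : Bool}
    (hne : (D ∩ {a | g a = b}).Nonempty) : Definable F (m + 1) (D ∩ {a | g a = b}) := by
  obtain ⟨-, f, δ, hf, rfl⟩ := hD
  refine ⟨hne, Fin.snoc f g, Fin.snoc δ b, Fin.lastCases (by simpa using hg) (by simpa using hf), ?_⟩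
  simp only [setOf_forall_fin_succ_eq_inter, Fin.snoc_castSucc, Fin.snoc_last]

end Definable

namespace UnionOfAtMost

variable {m t s : ℕ} {B : Set A}

lemma mono (hB : UnionOfAtMost F m t B) (hts : t ≤ s) : UnionOfAtMost F m s B :=
  let ⟨k, hk, D, hD, hBD⟩ := hB
  ⟨k, hk.trans hts, D, hD, hBD⟩

lemma empty : UnionOfAtMost F m t ∅ :=
  ⟨0, t.zero_le, Fin.elim0, fun i => i.elim0, (Set.iUnion_of_empty _).symm⟩

lemma iUnion {k : ℕ} {C : Fin k → Set A} {t : Fin k → ℕ}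
    (hC : ∀ j, UnionOfAtMost F m (t j) (C j)) : UnionOfAtMost F m (∑ j, t j) (⋃ j, C j) := by
  choose r hr D hD hCD using hC
  let e := (finSigmaFinEquiv (n := r)).symm
  refine mono ?_ (Finset.sum_le_sum fun j _ => hr j)
  refine ⟨_, le_rfl, fun i => D (e i).1 (e i).2, fun i => hD _ _, ?_⟩
  rw [e.surjective.iUnion_comp (fun p => D p.1 p.2), Set.iUnion_sigma]
  exact Set.iUnion_congr hCD

lemma inter_setOf (h : ∀ B : Set A, Definable F (m + 1) B → UnionOfAtMost F m t B)
    (hB : UnionOfAtMost F m s B) {g : A → Bool} (hg : g ∈ F) (b : Bool) :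
    UnionOfAtMost F m (s * t) (B ∩ {a | g a = b}) := by
  obtain ⟨k, hk, D, hD, rfl⟩ := hB
  have hpiece : ∀ j, UnionOfAtMost F m t (D j ∩ {a | g a = b}) := fun j => by
    rcases (D j ∩ {a | g a = b}).eq_empty_or_nonempty with hemp | hne
    · exact hemp ▸ empty
    · exact h _ ((hD j).inter_setOf hg hne)
  rw [Set.iUnion_inter]
  refine (iUnion hpiece).mono ?_
  simpa using Nat.mul_le_mul_right t hk

end UnionOfAtMost

end

theorem stmt_3_general {A : Type*} (F : Set (A → Bool)) (m t : ℕ)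
    (h : ∀ B : Set A, Definable F (m + 1) B → UnionOfAtMost F m t B) :
    ∀ n : ℕ, 1 ≤ n → ∀ B : Set A, Definable F n B → UnionOfAtMost F m (t ^ n) B := by
  intro n hn
  induction n, hn using Nat.le_induction with
  | base =>
    intro B hB
    simpa using h B (hB.of_le le_rfl m.succ_pos)
  | succ n _ ih =>
    intro B hB
    obtain ⟨B₀, hB₀, g, hg, b, rfl⟩ := hB.exists_eq_inter_of_succ
    rw [pow_succ]
    exact (ih B₀ hB₀).inter_setOf h hg b

theorem stmt_3 {A : Type*} (F : Set (A → Bool)) (m t : ℕ) (hm : 1 ≤ m)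
    (h : ∀ B : Set A, Definable F (m + 1) B → UnionOfAtMost F m t B) :
    ∀ n : ℕ, 1 ≤ n → ∀ B : Set A, Definable F n B → UnionOfAtMost F m (t ^ n) B :=
  stmt_3_general F m t h
end

section
/- The information system with universe ℕ and attribute set {p_i : i ∈ ℕ} (p_i(j)=1 iff j=i) does not satisfy the condition of coverage: for every m ∈ ℕ there exists an (m+1)-definable set that is not a finite union of m-definable sets. -/
/-- The attribute `p i` on the universe `ℕ`: `p i j = 1` iff `j = i`. -/
def p (i j : ℕ) : Bool := decide (j = i)

/-- `B` is a union of a finite number of `m`-definable sets. -/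
def FiniteUnionOf {A : Type*} (F : Set (A → Bool)) (m : ℕ) (B : Set A) : Prop :=
  ∃ k : ℕ, ∃ D : Fin k → Set A, (∀ i, Definable F m (D i)) ∧ B = ⋃ i, D i

/-
Every `m`-definable set is either contained in a singleton (some attribute `p c` is required
to be `1`) or misses at most `m` points (all attributes are required to be `0`); in the second
case it meets `{0, …, m}`. Hence the only `m`-definable subsets of the infinite
`(m+1)`-definable set `{j | m < j}` are finite, and so are their finite unions.
-/

theorem FiniteUnionOf.finite {A : Type*} {F : Set (A → Bool)} {m : ℕ} {B : Set A}
    (hB : FiniteUnionOf F m B) (h : ∀ D, Definable F m D → D ⊆ B → D.Finite) : B.Finite := by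
  obtain ⟨k, D, hD, rfl⟩ := hB
  exact Set.finite_iUnion fun i => h _ (hD i) (Set.subset_iUnion D i)

theorem exists_le_notMem_range {m : ℕ} (c : Fin m → ℕ) : ∃ j ≤ m, j ∉ Set.range c := by
  classical
  have hcard : (Finset.univ.image c).card < (Finset.range (m + 1)).card := by
    calc (Finset.univ.image c).card ≤ Finset.univ.card := Finset.card_image_le
      _ < (Finset.range (m + 1)).card := by simp
  obtain ⟨j, hj, hjc⟩ := Finset.exists_mem_notMem_of_card_lt_card hcard
  exact ⟨j, Nat.lt_succ_iff.1 (Finset.mem_range.1 hj), by simpa using hjc⟩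

theorem definable_Ioi (m : ℕ) : Definable (Set.range p) (m + 1) (Set.Ioi m) := by
  refine ⟨Set.nonempty_Ioi, fun i => p i, fun _ => false, fun i => ⟨i, rfl⟩, ?_⟩
  ext j
  simp only [Set.mem_Ioi, p, Fin.forall_iff, Set.mem_ofPred_eq, decide_eq_false_iff_not]
  exact ⟨fun h i hi hji => by omega, fun h => not_le.1 fun hj => h j (by omega) rfl⟩

theorem Definable.finite_of_subset_Ioi {m : ℕ} {D : Set ℕ} (hD : Definable (Set.range p) m D)
    (hsub : D ⊆ Set.Ioi m) : D.Finite := by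
  obtain ⟨-, f, δ, hf, rfl⟩ := hD
  choose c hc using hf
  by_cases hδ : ∃ l, δ l = true
  · obtain ⟨l, hl⟩ := hδ
    refine (Set.finite_singleton (c l)).subset fun j hj => ?_
    simpa [← hc l, hl, p] using hj l
  · simp only [not_exists, Bool.not_eq_true] at hδ
    obtain ⟨j, hjm, hjc⟩ := exists_le_notMem_range c
    have hj : j ∈ {a | ∀ i, f i a = δ i} := fun l => by
      simpa [← hc l, hδ l, p] using fun h => hjc ⟨l, h.symm⟩
    exact absurd (hsub hj) (not_lt.2 hjm)

theorem stmt_10_general (m : ℕ) :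
    ∃ B : Set ℕ, Definable (Set.range p) (m + 1) B ∧ ¬ FiniteUnionOf (Set.range p) m B :=
  ⟨Set.Ioi m, definable_Ioi m, fun hB =>
    Set.Ioi_infinite m (hB.finite fun _ hD hsub => hD.finite_of_subset_Ioi hsub)⟩

theorem stmt_10 (m : ℕ) (hm : 1 ≤ m) :
    ∃ B : Set ℕ, Definable (Set.range p) (m + 1) B ∧ ¬ FiniteUnionOf (Set.range p) m B :=
  stmt_10_general m
end

section
/- If an information system (A,F) has infinite universe A and attributes {p_i} ∪ {l_{2^i}} over ℕ (p_i(j)=1 iff j=i; l_{2^i}(j)=1 iff j>2^i), then for each m and each t there exist r and an (m+3)-definable set of size 2^r − m + 1 all of whose m-definable subsets are singletons; hence the system does not satisfy the condition of restricted coverage. -/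
/-- The attribute `l_{2^i}` on the universe `ℕ`: `l2 i j = 1` iff `j > 2^i`. -/
def l2 (i j : ℕ) : Bool := decide (2 ^ i < j)

/-- The attribute set `F = {p_i : i ∈ ℕ} ∪ {l_{2^i} : i ∈ ℕ}`. -/
def F : Set (ℕ → Bool) := Set.range p ∪ Set.range l2

/-! Take `B = [2^(s+1) + m, 2^(s+2)]` with `m < 2^s`: it is cut out by `x > 2^(s+1)`,
`x ≤ 2^(s+2)` and the `m - 1` conditions `x ≠ 2^(s+1) + j`, and has `2^(s+1) - m + 1` elements.
If `C ⊆ B` is defined by `m` conditions, none of the form `x = j`, then `C` is an interval cut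
out by thresholds `2^u`, minus at most `m` points. If the threshold `2^(s+1)` (resp. `2^(s+2)`) is
not among the conditions, `C` meets the dyadic block just below (resp. above) `B`, which has more
than `m` elements; if both are, only `m - 2` exclusions remain for the `m - 1` points just above
`2^(s+1)`. So `C` must be a singleton, and `B` is not a union of at most `t < |B|` sets defined
by `m` conditions. -/

open Finset in
theorem Finset.exists_mem_forall_of_card_lt {ι α : Type*} (P : Finset α) (S : Finset ι)
    (Q : ι → α → Prop) (hS : #S < #P) (hfail : ∀ i ∈ S, {x | x ∈ P ∧ ¬ Q i x}.Subsingleton)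
    (hhold : ∀ i ∉ S, ∀ x ∈ P, Q i x) : ∃ x ∈ P, ∀ i, Q i x := by
  classical
  have hbad : #(S.biUnion fun i => P.filter (¬ Q i ·)) < #P :=
    (card_biUnion_le_card_mul S _ 1 fun i hi =>
      card_le_one.2 fun x hx y hy => hfail i hi (by simpa using hx) (by simpa using hy)).trans_lt
      (by simpa using hS)
  obtain ⟨x, hxP, hx⟩ := exists_mem_notMem_of_card_lt_card hbad
  refine ⟨x, hxP, fun i => ?_⟩
  by_cases hi : i ∈ S
  · by_contra hQ
    exact hx (mem_biUnion.2 ⟨i, hi, mem_filter.2 ⟨hxP, hQ⟩⟩)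
  · exact hhold i hi x hxP

theorem Definable.mono {A : Type*} {F : Set (A → Bool)} {n n' : ℕ} {B : Set A}
    (hB : Definable F n B) (hn : 0 < n) (hnn' : n ≤ n') : Definable F n' B := by
  obtain ⟨hne, f, δ, hF, rfl⟩ := hB
  let clamp : Fin n' → Fin n := fun i => ⟨min i (n - 1), by omega⟩
  refine ⟨hne, f ∘ clamp, δ ∘ clamp, fun i => hF _,
    Set.ext fun a => ⟨fun ha i => ha _, fun ha i => ?_⟩⟩
  have hi : clamp ⟨i, by omega⟩ = i := Fin.ext (by simp only [clamp]; omega)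
  simpa only [Function.comp, hi] using ha ⟨i, by omega⟩

theorem not_unionOfAtMost_of_subsets_singleton {A : Type*} {F : Set (A → Bool)} {m t : ℕ}
    {B : Set A} (hcard : t < B.ncard)
    (hsing : ∀ C, Definable F m C → C ⊆ B → ∃ a, C = {a}) : ¬ UnionOfAtMost F m t B := by
  rintro ⟨k, hk, D, hD, rfl⟩
  have hle : (⋃ i, D i).ncard ≤ k :=
    calc (⋃ i, D i).ncard = (⋃ i ∈ Finset.univ, D i).ncard := by simp
      _ ≤ ∑ i : Fin k, (D i).ncard := Finset.set_ncard_biUnion_le _ _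
      _ = ∑ _i : Fin k, 1 := Finset.sum_congr rfl fun i _ => by
          obtain ⟨a, ha⟩ := hsing (D i) (hD i) (Set.subset_iUnion D i)
          rw [ha, Set.ncard_singleton]
      _ = k := by simp
  omega

theorem p_ne_l2 (j u : ℕ) : p j ≠ l2 u := fun h => by
  have := congrFun h (j + 2 ^ u + 1)
  simp only [p, l2, decide_eq_decide] at this
  have := Nat.one_le_two_pow (n := u)
  omega

theorem l2_injective : Function.Injective l2 := fun a b h => by
  have ha := congrFun h (2 ^ a + 1)
  have hb := congrFun h (2 ^ b + 1)
  simp only [l2, decide_eq_decide] at ha hb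
  exact Nat.pow_right_injective le_rfl (show 2 ^ a = 2 ^ b by omega)

theorem l2_eq_of_mem_Ioc {u a b x y : ℕ} (hu : u ≤ a ∨ b ≤ u) (hx : x ∈ Set.Ioc (2 ^ a) (2 ^ b))
    (hy : y ∈ Set.Ioc (2 ^ a) (2 ^ b)) : l2 u x = l2 u y := by
  obtain ⟨hx₁, hx₂⟩ := hx
  obtain ⟨hy₁, hy₂⟩ := hy
  simp only [l2, decide_eq_decide]
  rcases hu with hu | hu
  · have := Nat.pow_le_pow_right two_pos hu; omega
  · have := Nat.pow_le_pow_right two_pos hu; omega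

theorem definable_Icc {a b m : ℕ} (hm : 1 ≤ m) (hab : 2 ^ a + m ≤ 2 ^ b) :
    Definable F (m + 1) (Set.Icc (2 ^ a + m) (2 ^ b)) := by
  obtain ⟨k, rfl⟩ : ∃ k, m = k + 1 := ⟨m - 1, by omega⟩
  refine ⟨⟨2 ^ b, by simp; omega⟩, Fin.cons (l2 a) (Fin.cons (l2 b) fun j => p (2 ^ a + 1 + j)),
    Fin.cons true (Fin.cons false fun _ => false), ?_, ?_⟩
  · refine Fin.cases (Or.inr ⟨_, rfl⟩) (Fin.cases (Or.inr ⟨_, rfl⟩) fun j => Or.inl ⟨_, rfl⟩)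
  · ext x
    simp only [Set.mem_Icc, Fin.forall_fin_succ, Fin.cons_zero, Fin.cons_succ,
      l2, p, decide_eq_true_eq, decide_eq_false_iff_not]
    constructor
    · rintro ⟨h₁, h₂⟩
      exact ⟨by omega, by omega, fun j => by omega⟩
    · rintro ⟨h₁, h₂, hj⟩
      refine ⟨?_, by omega⟩
      by_contra! hx
      exact hj ⟨x - (2 ^ a + 1), by omega⟩ (by simp; omega)

open Finset in
theorem exists_solution_mem_of_card_lt {m a b c : ℕ} {f : Fin m → ℕ → Bool} {δ : Fin m → Bool}
    (hF : ∀ i, f i ∈ F) (hneg : ∀ i j, f i = p j → δ i = false) (hc : ∀ i, f i c = δ i)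
    (hcab : c ∈ Set.Ioc (2 ^ a) (2 ^ b)) (hl2 : ∀ i u, f i = l2 u → u ≤ a ∨ b ≤ u)
    (P : Finset ℕ) (hP : ∀ x ∈ P, x ∈ Set.Ioc (2 ^ a) (2 ^ b))
    (S : Finset (Fin m)) (hpS : ∀ i j, f i = p j → i ∈ S) (hcard : #S < #P) :
    ∃ x ∈ P, ∀ i, f i x = δ i := by
  have hl2_sat : ∀ i u, f i = l2 u → ∀ x ∈ P, f i x = δ i := fun i u hu x hx => by
    rw [← hc i, hu]
    exact l2_eq_of_mem_Ioc (hl2 i u hu) (hP x hx) hcab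
  refine exists_mem_forall_of_card_lt P S (fun i x => f i x = δ i) hcard (fun i _ => ?_) ?_
  · rcases hF i with ⟨j, hj⟩ | ⟨u, hu⟩
    · refine Set.subsingleton_of_subset_singleton (a := j) fun x hx => ?_
      simpa [← hj, hneg i j hj.symm, p] using hx.2
    · exact fun x hx => absurd (hl2_sat i u hu.symm x hx.1) hx.2
  · intro i hi
    obtain ⟨u, hu⟩ := (hF i).resolve_left fun ⟨j, hj⟩ => hi (hpS i j hj.symm)
    exact hl2_sat i u hu.symm

theorem eq_singleton_of_p_true {m j : ℕ} {f : Fin m → ℕ → Bool} {δ : Fin m → Bool} {i : Fin m}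
    (hij : f i = p j) (hδ : δ i = true) (hne : {a | ∀ i, f i a = δ i}.Nonempty) :
    {a | ∀ i, f i a = δ i} = {j} := by
  have hsat : ∀ x, f i x = δ i ↔ x = j := fun x => by simp [hij, hδ, p]
  obtain ⟨c, hc⟩ := hne
  exact Set.eq_singleton_iff_unique_mem.2 ⟨(hsat c).1 (hc i) ▸ hc, fun x hx => (hsat x).1 (hx i)⟩

open Finset in
theorem not_subset_Icc_of_p_false {m s c : ℕ} {f : Fin m → ℕ → Bool} {δ : Fin m → Bool}
    (hm : 1 ≤ m) (hms : m < 2 ^ s) (hF : ∀ i, f i ∈ F) (hneg : ∀ i j, f i = p j → δ i = false)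
    (hc : ∀ i, f i c = δ i) :
    ¬ {a | ∀ i, f i a = δ i} ⊆ Set.Icc (2 ^ (s + 1) + m) (2 ^ (s + 2)) := by
  intro hCB
  obtain ⟨hc₁, hc₂⟩ := hCB hc
  have h₁ : 2 ^ (s + 1) = 2 * 2 ^ s := by ring
  have h₂ : 2 ^ (s + 2) = 4 * 2 ^ s := by ring
  have h₃ : 2 ^ (s + 3) = 8 * 2 ^ s := by ring
  have escape : ∀ a b (P : Finset ℕ) (S : Finset (Fin m)), c ∈ Set.Ioc (2 ^ a) (2 ^ b) →
      (∀ i u, f i = l2 u → u ≤ a ∨ b ≤ u) → (∀ x ∈ P, x ∈ Set.Ioc (2 ^ a) (2 ^ b)) →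
      (∀ i j, f i = p j → i ∈ S) → #S < #P → ∃ x ∈ P, 2 ^ (s + 1) + m ≤ x ∧ x ≤ 2 ^ (s + 2) :=
    fun a b P S hcab hl2 hP hpS hcard =>
      let ⟨x, hxP, hx⟩ := exists_solution_mem_of_card_lt hF hneg hc hcab hl2 P hP S hpS hcard
      ⟨x, hxP, hCB hx⟩
  by_cases hlow : ∃ i, f i = l2 (s + 1)
  · by_cases hhigh : ∃ i, f i = l2 (s + 2)
    · obtain ⟨i₀, hi₀⟩ := hlow
      obtain ⟨i₁, hi₁⟩ := hhigh
      have hne : i₀ ≠ i₁ := fun h => by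
        have := l2_injective (hi₀.symm.trans (h ▸ hi₁)); omega
      have hpS : ∀ i j, f i = p j → i ∈ (univ.erase i₀).erase i₁ := fun i j hij => by
        simp only [mem_erase, mem_univ, and_true]
        exact ⟨fun h => p_ne_l2 j _ (hij.symm.trans (h ▸ hi₁)),
          fun h => p_ne_l2 j _ (hij.symm.trans (h ▸ hi₀))⟩
      have hS : #((univ.erase i₀).erase i₁) = m - 2 := by
        rw [card_erase_of_mem (by simpa using hne.symm), card_erase_of_mem (mem_univ _),
          card_univ, Fintype.card_fin, Nat.sub_sub]
      obtain ⟨x, hxP, hxB⟩ := escape (s + 1) (s + 2) (Ioc (2 ^ (s + 1)) (2 ^ (s + 1) + (m - 1)))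
        _ ⟨by omega, by omega⟩ (fun i u _ => by omega)
        (fun x hx => by rw [mem_Ioc] at hx; exact ⟨by omega, by omega⟩) hpS
        (by rw [hS, Nat.card_Ioc]; omega)
      rw [mem_Ioc] at hxP
      omega
    · push Not at hhigh
      obtain ⟨x, hxP, hxB⟩ := escape (s + 1) (s + 3) (Ioc (2 ^ (s + 2)) (2 ^ (s + 3))) univ
        ⟨by omega, by omega⟩
        (fun i u hu => by have := l2_injective.ne_iff.1 (hu ▸ hhigh i); omega)
        (fun x hx => by rw [mem_Ioc] at hx; exact ⟨by omega, by omega⟩) (fun _ _ _ => mem_univ _)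
        (by rw [card_univ, Fintype.card_fin, Nat.card_Ioc]; omega)
      rw [mem_Ioc] at hxP
      omega
  · push Not at hlow
    obtain ⟨x, hxP, hxB⟩ := escape s (s + 2) (Ioc (2 ^ s) (2 ^ (s + 1))) univ
      ⟨by omega, by omega⟩
      (fun i u hu => by have := l2_injective.ne_iff.1 (hu ▸ hlow i); omega)
      (fun x hx => by rw [mem_Ioc] at hx; exact ⟨by omega, by omega⟩) (fun _ _ _ => mem_univ _)
      (by rw [card_univ, Fintype.card_fin, Nat.card_Ioc]; omega)
    rw [mem_Ioc] at hxP
    omega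

theorem eq_singleton_of_definable_subset_Icc {m s : ℕ} {C : Set ℕ} (hm : 1 ≤ m) (hms : m < 2 ^ s)
    (hC : Definable F m C) (hCB : C ⊆ Set.Icc (2 ^ (s + 1) + m) (2 ^ (s + 2))) :
    ∃ a, C = {a} := by
  obtain ⟨hne, f, δ, hF, rfl⟩ := hC
  by_cases hpos : ∃ i j, f i = p j ∧ δ i = true
  · obtain ⟨i, j, hij, hδ⟩ := hpos
    exact ⟨j, eq_singleton_of_p_true hij hδ hne⟩
  · push Not at hpos
    obtain ⟨c, hc⟩ := hne
    have hneg : ∀ i j, f i = p j → δ i = false := fun i j h => by simpa using hpos i j h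
    exact absurd hCB (not_subset_Icc_of_p_false hm hms hF hneg hc)

theorem stmt_12 (m t : ℕ) (hm : 1 ≤ m) :
    (∃ r : ℕ, ∃ B : Set ℕ, t < 2 ^ r - m + 1 ∧ Definable F (m + 3) B ∧
      B.ncard = 2 ^ r - m + 1 ∧
      (∀ C : Set ℕ, Definable F m C → C ⊆ B → ∃ a : ℕ, C = {a})) ∧
    ¬ (∀ B : Set ℕ, Definable F (m + 1) B → UnionOfAtMost F m t B) := by
  set s := m + t
  have hs : s < 2 ^ s := Nat.lt_two_pow_self
  have h₁ : 2 ^ (s + 1) = 2 * 2 ^ s := by ring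
  have h₂ : 2 ^ (s + 2) = 4 * 2 ^ s := by ring
  set B := Set.Icc (2 ^ (s + 1) + m) (2 ^ (s + 2))
  have hBdef : Definable F (m + 1) B := definable_Icc hm (by omega)
  have hBcard : B.ncard = 2 ^ (s + 1) - m + 1 := by
    rw [Set.ncard_Icc_nat]
    omega
  have hsing : ∀ C, Definable F m C → C ⊆ B → ∃ a, C = {a} :=
    fun C hC hCB => eq_singleton_of_definable_subset_Icc hm (by omega) hC hCB
  exact ⟨⟨s + 1, B, by omega, hBdef.mono (by omega) (by omega), hBcard, hsing⟩,
    fun h => not_unionOfAtMost_of_subsets_singleton (by omega) hsing (h B hBdef)⟩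
end
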